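/- arXiv:2509.02307 — 2 statements merged into one kernel-verified Lean document; each statement's English description precedes it below -/
import Mathlib

section
/- For β ≥ 3, a real number θ with π/2 < θ < π, τ > 0, r > 0, and z = r·e^{iθ}, if e^{-rτ cos θ} ≤ (β - 1/3)/(β - 1), then |β + (1-β)·e^{-zτ}| ≥ 1/3. -/
open Real Complex

theorem re_ofReal_mul_exp_mul_I_mul_ofReal (r θ τ : ℝ) :
    ((r : ℂ) * exp (θ * I) * τ).re = r * τ * Real.cos θ := by
  rw [exp_mul_I, ← ofReal_cos, ← ofReal_sin]
  simp only [mul_re, mul_im, add_re, add_im, ofReal_re, ofReal_im, I_re, I_im]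
  ring

theorem le_norm_ofReal_add_one_sub_mul {β c : ℝ} (hβ : 1 < β) {w : ℂ}
    (hw : ‖w‖ ≤ (β - c) / (β - 1)) : c ≤ ‖(β : ℂ) + (1 - β) * w‖ := by
  have hβ1 : 0 < β - 1 := sub_pos.mpr hβ
  have h_coeff : ‖(1 - β : ℂ)‖ = β - 1 := by
    rw [← ofReal_one, ← ofReal_sub, norm_real, Real.norm_of_nonpos (by linarith), neg_sub]
  have h_pert : ‖(1 - β : ℂ) * w‖ ≤ β - c := by
    rw [norm_mul, h_coeff, ← le_div_iff₀' hβ1]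
    exact hw
  have h_rev := norm_sub_le_norm_add (β : ℂ) ((1 - β) * w)
  rw [norm_real, Real.norm_of_nonneg (by linarith)] at h_rev
  linarith

theorem stmt0_general (β θ τ r : ℝ) (z : ℂ)
    (hβ : 3 ≤ β)
    (hz : z = (r : ℂ) * Complex.exp ((θ : ℂ) * Complex.I))
    (hcond : Real.exp (-(r * τ * Real.cos θ)) ≤ (β - 1/3) / (β - 1)) :
    (1 : ℝ) / 3 ≤ ‖(β : ℂ) + (1 - (β : ℂ)) * Complex.exp (-(z * (τ : ℂ)))‖ := by
  refine le_norm_ofReal_add_one_sub_mul (by linarith) ?_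
  rwa [norm_exp, neg_re, hz, re_ofReal_mul_exp_mul_I_mul_ofReal]

theorem stmt0 (β θ τ r : ℝ) (z : ℂ)
    (hβ : 3 ≤ β) (hθ1 : Real.pi / 2 < θ) (hθ2 : θ < Real.pi)
    (hτ : 0 < τ) (hr : 0 < r)
    (hz : z = (r : ℂ) * Complex.exp ((θ : ℂ) * Complex.I))
    (hcond : Real.exp (-(r * τ * Real.cos θ)) ≤ (β - 1/3) / (β - 1)) :
    (1 : ℝ) / 3 ≤ ‖(β : ℂ) + (1 - (β : ℂ)) * Complex.exp (-(z * (τ : ℂ)))‖ :=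
  stmt0_general β θ τ r z hβ hz hcond
end

section
/- For the shifted BDF-k characteristic polynomial ρ_s(ξ) = Σ_{j=1}^k (1/j)(1−ξ)^j − Σ_{j=2}^k (1/(j−1))(1−ξ)^j with 2 ≤ k ≤ 7, there exist c > 0 and a neighborhood of λ = 0 such that |ρ_s(e^{-λ}) − λ e^{-λ}| ≤ c|λ|^{k+1}. -/
/-!
Put `x = 1 - e^{-λ}`, so that `λ = -log (1 - x)` and `|x| ≤ 2|λ|` near `0`. Writing
`L_m(x) = ∑_{j<m} x^j / j` for the truncations of the series of `-log (1 - x)`, the two sums of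
`ρ_s(1 - x)` are `L_{k+1}(x)` and `x L_k(x)`, hence
`ρ_s(e^{-λ}) - λ e^{-λ} = (L_{k+1}(x) + log (1 - x)) - x (L_k(x) + log (1 - x))`,
and both tails are bounded by geometric series: the whole is `O(|x|^{k+1}) = O(|λ|^{k+1})`.
-/

open Complex Finset

lemma sum_Icc_one_div_mul_pow {K : Type*} [Field K] (x : K) (k : ℕ) :
    ∑ j ∈ Icc 1 k, 1 / (j : K) * x ^ j = ∑ j ∈ range (k + 1), x ^ j / j := by
  induction k with
  | zero => simp
  | succ k ih =>
    rw [sum_Icc_succ_top (by omega), sum_range_succ, ih]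
    ring

lemma sum_Icc_two_div_sub_one_mul_pow {K : Type*} [Field K] (x : K) (k : ℕ) :
    ∑ j ∈ Icc 2 k, 1 / ((j : K) - 1) * x ^ j = x * ∑ j ∈ range k, x ^ j / j := by
  induction k with
  | zero => simp
  | succ k ih =>
    rcases k.eq_zero_or_pos with rfl | hk
    · simp
    rw [sum_Icc_succ_top (by omega), sum_range_succ, ih]
    push_cast
    ring

lemma norm_pow_div_natCast_le (x : ℂ) (n : ℕ) : ‖x ^ n / n‖ ≤ ‖x‖ ^ n := by
  rcases n.eq_zero_or_pos with rfl | hn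
  · simp
  rw [norm_div, norm_pow, norm_natCast]
  exact div_le_self (by positivity) (by exact_mod_cast hn)

lemma norm_sum_range_pow_div_add_log_le (m : ℕ) {x : ℂ} (hx : ‖x‖ < 1) :
    ‖∑ j ∈ range m, x ^ j / j + log (1 - x)‖ ≤ ‖x‖ ^ m * (1 - ‖x‖)⁻¹ := by
  have htail := (hasSum_nat_add_iff' m).mpr (hasSum_taylorSeries_neg_log hx)
  have hgeom := (hasSum_geometric_of_lt_one (norm_nonneg x) hx).mul_left (‖x‖ ^ m)
  have := htail.norm_le_of_bounded hgeom fun n ↦ by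
    simpa only [pow_add, mul_comm] using norm_pow_div_natCast_le x (n + m)
  rwa [← norm_neg, neg_sub, sub_neg_eq_add] at this

lemma norm_sum_range_succ_sub_mul_sum_range_add_mul_log_le (k : ℕ) {x : ℂ} (hx : ‖x‖ ≤ 1 / 2) :
    ‖∑ j ∈ range (k + 1), x ^ j / j - x * ∑ j ∈ range k, x ^ j / j + (1 - x) * log (1 - x)‖
      ≤ 4 * ‖x‖ ^ (k + 1) := by
  have hx1 : ‖x‖ < 1 := by linarith
  have hinv : (1 - ‖x‖)⁻¹ ≤ 2 := by
    rw [inv_le_comm₀ (by linarith) two_pos]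
    linarith
  have h₁ := (norm_sum_range_pow_div_add_log_le (k + 1) hx1).trans
    (mul_le_mul_of_nonneg_left hinv (by positivity))
  have h₀ := (norm_sum_range_pow_div_add_log_le k hx1).trans
    (mul_le_mul_of_nonneg_left hinv (by positivity))
  calc _ = ‖(∑ j ∈ range (k + 1), x ^ j / j + log (1 - x))
          - x * (∑ j ∈ range k, x ^ j / j + log (1 - x))‖ := by ring_nf
    _ ≤ ‖∑ j ∈ range (k + 1), x ^ j / j + log (1 - x)‖
          + ‖x‖ * ‖∑ j ∈ range k, x ^ j / j + log (1 - x)‖ := by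
      rw [← norm_mul]
      exact norm_sub_le _ _
    _ ≤ ‖x‖ ^ (k + 1) * 2 + ‖x‖ * (‖x‖ ^ k * 2) := by gcongr
    _ = 4 * ‖x‖ ^ (k + 1) := by ring

lemma log_exp_of_norm_lt_pi {z : ℂ} (hz : ‖z‖ < Real.pi) : log (exp z) = z := by
  have him := abs_le.mp (abs_im_le_norm z)
  exact log_exp (by linarith) (by linarith)

theorem stmt7_general (k : ℕ) :
    ∃ c > (0:ℝ), ∃ ε > (0:ℝ), ∀ lam : ℂ, ‖lam‖ < ε →
      ‖((∑ j ∈ Finset.Icc 1 k, (1 / (j : ℂ)) * (1 - Complex.exp (-lam))^j)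
          - (∑ j ∈ Finset.Icc 2 k, (1 / ((j : ℂ) - 1)) * (1 - Complex.exp (-lam))^j))
          - lam * Complex.exp (-lam)‖
        ≤ c * ‖lam‖ ^ (k + 1) := by
  refine ⟨4 * 2 ^ (k + 1), by positivity, 1 / 4, by norm_num, fun lam hlam ↦ ?_⟩
  set x := 1 - exp (-lam)
  have hx : ‖x‖ ≤ 2 * ‖lam‖ := by
    simpa only [x, norm_sub_rev, norm_neg] using
      norm_exp_sub_one_le (x := -lam) (by rw [norm_neg]; linarith)
  have hlog : log (1 - x) = -lam := by
    rw [sub_sub_cancel]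
    exact log_exp_of_norm_lt_pi (by rw [norm_neg]; linarith [Real.pi_gt_three])
  have hexp : lam * exp (-lam) = -((1 - x) * log (1 - x)) := by
    rw [hlog, sub_sub_cancel]
    ring
  rw [sum_Icc_one_div_mul_pow, sum_Icc_two_div_sub_one_mul_pow, hexp, sub_neg_eq_add]
  calc _ ≤ 4 * ‖x‖ ^ (k + 1) :=
        norm_sum_range_succ_sub_mul_sum_range_add_mul_log_le k (by linarith)
    _ ≤ 4 * (2 * ‖lam‖) ^ (k + 1) := by gcongr
    _ = 4 * 2 ^ (k + 1) * ‖lam‖ ^ (k + 1) := by ring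

theorem stmt7 (k : ℕ) (hk2 : 2 ≤ k) (hk7 : k ≤ 7) :
    ∃ c > (0:ℝ), ∃ ε > (0:ℝ), ∀ lam : ℂ, ‖lam‖ < ε →
      ‖((∑ j ∈ Finset.Icc 1 k, (1 / (j : ℂ)) * (1 - Complex.exp (-lam))^j)
          - (∑ j ∈ Finset.Icc 2 k, (1 / ((j : ℂ) - 1)) * (1 - Complex.exp (-lam))^j))
          - lam * Complex.exp (-lam)‖
        ≤ c * ‖lam‖ ^ (k + 1) :=
  stmt7_general k
end
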